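/- arXiv:2110.15168 — 4 statements merged into one kernel-verified Lean document; each statement's English description precedes it below -/
import Mathlib

section
/- A connected bipartite graph G is a partial cube if and only if for every edge uv the sets W(u,v) and W(v,u) are convex (where a set S is convex if every shortest path between two vertices of S stays in S). -/
open SimpleGraph Finset
set_option linter.unusedSectionVars false

section Aux

variable {V : Type*} [Fintype V] {G : SimpleGraph V}

private lemma walk_parity (C : G.Coloring (Fin 2)) {x y : V} (p : G.Walk x y) :
    Even p.length ↔ C x = C y := by
  induction p with
  | nil => simp
  | @cons x z y h q ih =>
    have hne : C x ≠ C z := C.valid h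
    have key : ∀ a b c : Fin 2, a ≠ b → (¬(b = c) ↔ a = c) := by decide
    simp only [SimpleGraph.Walk.length_cons, Nat.even_add_one, ih]
    exact key _ _ _ hne

private lemma dist_parity (hconn : G.Connected) (C : G.Coloring (Fin 2)) (x y : V) :
    Even (G.dist x y) ↔ C x = C y := by
  obtain ⟨p, hp⟩ := hconn.exists_walk_length_eq_dist x y
  rw [← hp]; exact walk_parity C p

private lemma adj_dist_dichotomy (hconn : G.Connected) (hbip : G.Colorable 2)
    {u v : V} (h : G.Adj u v) (z : V) :
    G.dist z v = G.dist z u + 1 ∨ G.dist z u = G.dist z v + 1 := by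
  obtain ⟨C⟩ := hbip
  have hCuv : C u ≠ C v := C.valid h
  have hne : G.dist z u ≠ G.dist z v := by
    intro he
    have h1 := dist_parity hconn C z u
    have h2 := dist_parity hconn C z v
    rw [he] at h1
    have : C z = C u ↔ C z = C v := h1.symm.trans h2
    have key : ∀ a b c : Fin 2, b ≠ c → ¬((a = b) ↔ (a = c)) := by decide
    exact key _ _ _ hCuv this
  have h1 : G.dist v u = 1 := SimpleGraph.dist_eq_one_iff_adj.mpr h.symm
  have h2 : G.dist u v = 1 := SimpleGraph.dist_eq_one_iff_adj.mpr h
  have t1 : G.dist z u ≤ G.dist z v + G.dist v u := hconn.dist_triangle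
  have t2 : G.dist z v ≤ G.dist z u + G.dist u v := hconn.dist_triangle
  omega

end Aux

section Key

variable {V : Type*} [Fintype V] {G : SimpleGraph V}

/-- Convexity of all positive halfspaces (equivalent to the RHS of the theorem). -/
private def Cvx (G : SimpleGraph V) : Prop :=
  ∀ u v : V, G.Adj u v →
    ∀ a ∈ {x : V | G.dist x u < G.dist x v}, ∀ b ∈ {x : V | G.dist x u < G.dist x v},
      ∀ w : V, G.dist a w + G.dist w b = G.dist a b → w ∈ {x : V | G.dist x u < G.dist x v}

private lemma cross_dist (hconn : G.Connected) {u v x y : V}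
    (huv : G.Adj u v) (hxy : G.Adj x y)
    (hx : G.dist x u < G.dist x v) (hy : G.dist y v < G.dist y u) :
    G.dist x u = G.dist y v := by
  have h1 : G.dist y x = 1 := SimpleGraph.dist_eq_one_iff_adj.mpr hxy.symm
  have h2 : G.dist x y = 1 := SimpleGraph.dist_eq_one_iff_adj.mpr hxy
  have t1 : G.dist y u ≤ G.dist y x + G.dist x u := hconn.dist_triangle
  have t2 : G.dist x v ≤ G.dist x y + G.dist y v := hconn.dist_triangle
  omega

private lemma W_incl (hconn : G.Connected) (hbip : G.Colorable 2) (hcv : Cvx G)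
    {u v x y : V} (huv : G.Adj u v) (hxy : G.Adj x y)
    (hx : G.dist x u < G.dist x v) (hy : G.dist y v < G.dist y u) :
    {z : V | G.dist z u < G.dist z v} ⊆ {z : V | G.dist z x < G.dist z y} := by
  intro z hz
  simp only [Set.mem_setOf_eq] at hz ⊢
  by_contra hcon
  have hzd := adj_dist_dichotomy hconn hbip huv z
  have hzxy := adj_dist_dichotomy hconn hbip hxy z
  have hzyx : G.dist z y < G.dist z x := by omega
  have ha := cross_dist hconn huv hxy hx hy
  -- v ∈ W(y,x)
  have hvy : G.dist v y < G.dist v x := by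
    rw [SimpleGraph.dist_comm (G := G) (u := v) (v := y), SimpleGraph.dist_comm (G := G) (u := v) (v := x)]
    omega
  -- u lies on a geodesic from z to v
  have hguv : G.dist z u + G.dist u v = G.dist z v := by
    have : G.dist u v = 1 := SimpleGraph.dist_eq_one_iff_adj.mpr huv
    omega
  have := hcv y x hxy.symm z hzyx v hvy u hguv
  simp only [Set.mem_setOf_eq] at this
  rw [SimpleGraph.dist_comm (G := G) (u := u) (v := y), SimpleGraph.dist_comm (G := G) (u := u) (v := x)] at this
  omega

private lemma W_eq (hconn : G.Connected) (hbip : G.Colorable 2) (hcv : Cvx G)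
    {u v x y : V} (huv : G.Adj u v) (hxy : G.Adj x y)
    (hx : G.dist x u < G.dist x v) (hy : G.dist y v < G.dist y u) :
    {z : V | G.dist z u < G.dist z v} = {z : V | G.dist z x < G.dist z y} := by
  have ha := cross_dist hconn huv hxy hx hy
  refine subset_antisymm (W_incl hconn hbip hcv huv hxy hx hy) ?_
  refine W_incl hconn hbip hcv hxy huv ?_ ?_
  · rw [SimpleGraph.dist_comm (G := G) (u := u) (v := x), SimpleGraph.dist_comm (G := G) (u := u) (v := y)]; omega
  · rw [SimpleGraph.dist_comm (G := G) (u := v) (v := y), SimpleGraph.dist_comm (G := G) (u := v) (v := x)]; omega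

end Key

section Count

variable {V : Type*} [Fintype V] {G : SimpleGraph V}

private def isCut (G : SimpleGraph V) (S : Set V) : Prop :=
  ∃ u v, G.Adj u v ∧ S = {z : V | G.dist z u < G.dist z v}

open Classical in
private noncomputable def sep (G : SimpleGraph V) (v₀ x y : V) : Finset (Set V) :=
  Finset.univ.filter (fun S => isCut G S ∧ v₀ ∉ S ∧ (x ∈ S ↔ y ∉ S))

open Classical in
private lemma mem_sep {v₀ x y : V} {S : Set V} :
    S ∈ sep G v₀ x y ↔ isCut G S ∧ v₀ ∉ S ∧ (x ∈ S ↔ y ∉ S) := by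
  simp [sep]

private lemma crux (hconn : G.Connected) (hbip : G.Colorable 2) (hcv : Cvx G) (v₀ : V) :
    ∀ k : ℕ, ∀ x y : V, G.dist x y = k → (sep G v₀ x y).card = k := by
  intro k
  induction k with
  | zero =>
    intro x y hd
    have : x = y := (hconn.dist_eq_zero_iff).mp hd
    subst this
    rw [Finset.card_eq_zero, Finset.eq_empty_iff_forall_notMem]
    intro S hS
    rcases mem_sep.mp hS with ⟨_, _, h⟩
    tauto
  | succ k ih =>
    intro x y hd
    obtain ⟨p, hp⟩ := hconn.exists_walk_length_eq_dist x y
    rw [hd] at hp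
    cases hq : p.reverse with
    | nil =>
      exfalso
      have := congrArg SimpleGraph.Walk.length hq
      rw [SimpleGraph.Walk.length_reverse, hp] at this
      simp at this
    | @cons _ w _ h q =>
      -- h : G.Adj y w, q : G.Walk w x
      have hql : q.length = k := by
        have := congrArg SimpleGraph.Walk.length hq
        rw [SimpleGraph.Walk.length_reverse, hp] at this
        simpa using this.symm
      have hxw : G.dist x w = k := by
        have h1 : G.dist w x ≤ k := hql ▸ SimpleGraph.dist_le q
        have h2 : G.dist x w = G.dist w x := SimpleGraph.dist_comm
        have hwy : G.dist w y = 1 := SimpleGraph.dist_eq_one_iff_adj.mpr h.symm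
        have t : G.dist x y ≤ G.dist x w + G.dist w y := hconn.dist_triangle
        omega
      have hA := ih x w hxw
      set A : Set V := {z : V | G.dist z w < G.dist z y} with hAdef
      set B : Set V := {z : V | G.dist z y < G.dist z w} with hBdef
      have hdich := adj_dist_dichotomy hconn hbip h.symm
      have hmemA : ∀ z, z ∈ A ↔ G.dist z w < G.dist z y := fun z => Iff.rfl
      have hmemB : ∀ z, z ∈ B ↔ G.dist z y < G.dist z w := fun z => Iff.rfl
      have hAB : ∀ z, (z ∈ A ↔ z ∉ B) := by
        intro z
        have := hdich z
        simp only [hmemA, hmemB]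
        omega
      have hxA : x ∈ A := by
        simp only [hmemA]
        have hwy : G.dist x y ≤ G.dist x w + 1 := by
          have hwy1 : G.dist w y = 1 := SimpleGraph.dist_eq_one_iff_adj.mpr h.symm
          have := hconn.dist_triangle (u := x) (v := w) (w := y)
          omega
        omega
      have hwA : w ∈ A := by
        simp only [hmemA, SimpleGraph.dist_self]
        have : G.dist w y = 1 := SimpleGraph.dist_eq_one_iff_adj.mpr h.symm
        omega
      have hyB : y ∈ B := by
        simp only [hmemB, SimpleGraph.dist_self]
        have : G.dist y w = 1 := SimpleGraph.dist_eq_one_iff_adj.mpr h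
        omega
      have hyA : y ∉ A := fun hc => (hAB y).mp hc hyB
      have hxB : x ∉ B := fun hc => ((hAB x).mp hxA) hc
      have hwB : w ∉ B := fun hc => ((hAB w).mp hwA) hc
      have hcutA : isCut G A := ⟨w, y, h.symm, rfl⟩
      have hcutB : isCut G B := ⟨y, w, h, rfl⟩
      -- the key transfer property
      have hN : ∀ S : Set V, isCut G S → S ≠ A → S ≠ B → (w ∈ S ↔ y ∈ S) := by
        rintro S ⟨u, v, huv, rfl⟩ hSA hSB
        constructor
        · intro hwS
          by_contra hyS
          have hy' : G.dist y v < G.dist y u := by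
            have := adj_dist_dichotomy hconn hbip huv y
            simp only [Set.mem_setOf_eq] at hyS
            omega
          exact hSA (W_eq hconn hbip hcv huv h.symm hwS hy')
        · intro hyS
          by_contra hwS
          have hw' : G.dist w v < G.dist w u := by
            have := adj_dist_dichotomy hconn hbip huv w
            simp only [Set.mem_setOf_eq] at hwS
            omega
          exact hSB (W_eq hconn hbip hcv huv h hyS hw')
      classical
      set S' : Set V := if v₀ ∈ A then B else A with hS'def
      have hS'cut : isCut G S' := by
        rw [hS'def]; split <;> assumption
      have hS'v₀ : v₀ ∉ S' := by
        rw [hS'def]; split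
        · exact fun hc => (hAB v₀).mp ‹v₀ ∈ A› hc
        · assumption
      have hS'xy : x ∈ S' ↔ y ∉ S' := by
        rw [hS'def]; split
        · constructor
          · intro hc; exact absurd hc hxB
          · intro hc; exact absurd hyB hc
        · tauto
      have hS'notxw : S' ∉ sep G v₀ x w := by
        intro hc
        rcases mem_sep.mp hc with ⟨_, _, hxw'⟩
        rw [hS'def] at hxw'
        revert hxw'
        split
        · intro hxw'; exact hxB (hxw'.mpr hwB)
        · intro hxw'; exact (hxw'.mp hxA) hwA
      have hset : sep G v₀ x y = insert S' (sep G v₀ x w) := by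
        ext S
        rw [Finset.mem_insert, mem_sep, mem_sep]
        constructor
        · rintro ⟨hcut, hv₀, hsep⟩
          by_cases hSA : S = A
          · left; subst hSA; rw [hS'def, if_neg hv₀]
          · by_cases hSB : S = B
            · left; subst hSB
              have hvA : v₀ ∈ A := (hAB v₀).mpr hv₀
              rw [hS'def, if_pos hvA]
            · right
              have htr := hN S hcut hSA hSB
              exact ⟨hcut, hv₀,
                ⟨fun hx' hw' => (hsep.mp hx') (htr.mp hw'),
                 fun hw' => hsep.mpr (fun hy' => hw' (htr.mpr hy'))⟩⟩
        · rintro (rfl | ⟨hcut, hv₀, hsep⟩)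
          · exact ⟨hS'cut, hS'v₀, hS'xy⟩
          · by_cases hSA : S = A
            · exfalso; subst hSA; exact (hsep.mp hxA) hwA
            · by_cases hSB : S = B
              · exfalso; subst hSB; exact hxB (hsep.mpr hwB)
              · have htr := hN S hcut hSA hSB
                exact ⟨hcut, hv₀,
                  ⟨fun hx' hy' => (hsep.mp hx') (htr.mpr hy'),
                   fun hy' => hsep.mpr (fun hw' => hy' (htr.mp hw'))⟩⟩
      rw [hset, Finset.card_insert_of_notMem hS'notxw, hA]

end Count

section Main

variable {V : Type*} [Fintype V] {G : SimpleGraph V}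

private lemma forward_conv (hconn : G.Connected) {n : ℕ} {φ : V → Fin n → Bool}
    (hφ : ∀ x y : V, G.dist x y = hammingDist (φ x) (φ y))
    {u v : V} (huv : G.Adj u v) :
    ∀ a ∈ {x : V | G.dist x u < G.dist x v}, ∀ b ∈ {x : V | G.dist x u < G.dist x v},
      ∀ w : V, G.dist a w + G.dist w b = G.dist a b →
        w ∈ {x : V | G.dist x u < G.dist x v} := by
  have hsum : ∀ x y : V,
      G.dist x y = ∑ j : Fin n, (if φ x j ≠ φ y j then 1 else 0) := by
    intro x y
    rw [hφ x y, hammingDist, Finset.sum_boole, Nat.cast_id]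
  have hd1 : hammingDist (φ u) (φ v) = 1 := by
    rw [← hφ]; exact SimpleGraph.dist_eq_one_iff_adj.mpr huv
  rw [hammingDist] at hd1
  obtain ⟨i0, hi⟩ := Finset.card_eq_one.mp hd1
  have huvj : ∀ j : Fin n, φ u j ≠ φ v j ↔ j = i0 := by
    intro j
    constructor
    · intro hj
      have : j ∈ ({i0} : Finset (Fin n)) := by
        rw [← hi]; simp [hj]
      simpa using this
    · intro hj
      have hmem : j ∈ Finset.filter (fun k => φ u k ≠ φ v k) Finset.univ := by
        rw [hi, hj]; exact Finset.mem_singleton_self i0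
      simpa using hmem
  have hne : φ u i0 ≠ φ v i0 := (huvj i0).mpr rfl
  have hchar : ∀ x : V, (G.dist x u < G.dist x v ↔ φ x i0 = φ u i0) := by
    intro x
    rw [hsum x u, hsum x v,
      ← Finset.sum_erase_add Finset.univ _ (Finset.mem_univ i0),
      ← Finset.sum_erase_add Finset.univ
        (fun j => if φ x j ≠ φ v j then 1 else 0) (Finset.mem_univ i0)]
    have htail : ∑ j ∈ Finset.univ.erase i0, (if φ x j ≠ φ u j then (1:ℕ) else 0) =
        ∑ j ∈ Finset.univ.erase i0, (if φ x j ≠ φ v j then (1:ℕ) else 0) := by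
      refine Finset.sum_congr rfl (fun j hj => ?_)
      have hji : j ≠ i0 := (Finset.mem_erase.mp hj).1
      have huvj' : φ u j = φ v j := by
        by_contra hc
        exact hji ((huvj j).mp hc)
      rw [huvj']
    rw [htail, add_lt_add_iff_left]
    have key : ∀ a b c : Bool, b ≠ c →
        (((if a ≠ b then 1 else 0) : ℕ) < (if a ≠ c then 1 else 0) ↔ a = b) := by decide
    exact key _ _ _ hne
  intro a ha b hb w hw
  simp only [Set.mem_setOf_eq] at ha hb ⊢
  have hai : φ a i0 = φ u i0 := (hchar a).mp ha
  have hbi : φ b i0 = φ u i0 := (hchar b).mp hb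
  rw [hchar w]
  have hwsum : ∑ j : Fin n, ((if φ a j ≠ φ w j then (1:ℕ) else 0) +
      (if φ w j ≠ φ b j then 1 else 0)) = ∑ j : Fin n, (if φ a j ≠ φ b j then (1:ℕ) else 0) := by
    rw [Finset.sum_add_distrib, ← hsum, ← hsum, ← hsum]
    exact hw
  have hpt : ∀ j ∈ Finset.univ, (if φ a j ≠ φ b j then (1:ℕ) else 0) ≤
      (if φ a j ≠ φ w j then 1 else 0) + (if φ w j ≠ φ b j then 1 else 0) := by
    intro j _
    have : ∀ p q r : Bool, ((if p ≠ r then 1 else 0) : ℕ) ≤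
        (if p ≠ q then 1 else 0) + (if q ≠ r then 1 else 0) := by decide
    exact this _ _ _
  have heq := (Finset.sum_eq_sum_iff_of_le hpt).mp hwsum.symm i0 (Finset.mem_univ i0)
  have hab : φ a i0 = φ b i0 := hai.trans hbi.symm
  have key2 : ∀ p q r : Bool, p = r →
      ((if p ≠ r then 1 else 0) : ℕ) = (if p ≠ q then 1 else 0) + (if q ≠ r then 1 else 0) →
      q = p := by decide
  rw [key2 (φ a i0) (φ w i0) (φ b i0) hab heq]
  exact hai

end Main

/-- A connected bipartite graph `G` is a partial cube if and only if for every
edge `uv` the sets `W(u,v)` and `W(v,u)` are convex. -/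
theorem partialCube_iff_halfspaces_convex
    {V : Type*} [Fintype V] (G : SimpleGraph V) (hconn : G.Connected)
    (hbip : G.Colorable 2) :
    (∃ (n : ℕ) (φ : V → Fin n → Bool),
        ∀ x y : V, G.dist x y = hammingDist (φ x) (φ y)) ↔
    (∀ u v : V, G.Adj u v →
      (∀ a ∈ {x : V | G.dist x u < G.dist x v}, ∀ b ∈ {x : V | G.dist x u < G.dist x v},
        ∀ w : V, G.dist a w + G.dist w b = G.dist a b → w ∈ {x : V | G.dist x u < G.dist x v}) ∧
      (∀ a ∈ {x : V | G.dist x v < G.dist x u}, ∀ b ∈ {x : V | G.dist x v < G.dist x u},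
        ∀ w : V, G.dist a w + G.dist w b = G.dist a b → w ∈ {x : V | G.dist x v < G.dist x u})) := by
  constructor
  · rintro ⟨n, φ, hφ⟩ u v huv
    exact ⟨forward_conv hconn hφ huv, forward_conv hconn hφ huv.symm⟩
  · intro hrhs
    classical
    have hcv : Cvx G := fun u v h => (hrhs u v h).1
    obtain ⟨v₀⟩ := hconn.nonempty
    refine ⟨Fintype.card (Set V), fun x i =>
      decide (isCut G ((Fintype.equivFin (Set V)).symm i) ∧
        v₀ ∉ (Fintype.equivFin (Set V)).symm i ∧ x ∈ (Fintype.equivFin (Set V)).symm i), ?_⟩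
    intro x y
    have hcard := crux hconn hbip hcv v₀ (G.dist x y) x y rfl
    rw [← hcard, hammingDist]
    apply Finset.card_equiv (Fintype.equivFin (Set V))
    intro S
    simp only [Finset.mem_filter, Finset.mem_univ, true_and, mem_sep,
      Equiv.symm_apply_apply]
    rw [ne_eq, decide_eq_decide]
    tauto
end

section
/- Let G be a partial cube embedded in the hypercube {-1,+1}^U and let H be a convex subgraph of G. If D ⊆ U is a set of coordinates such that each Θ-class E_e with e ∈ D crosses H (H contains an edge whose endpoints differ exactly in coordinate e), H is gated in G, and D is shattered by the vertex set of G, then D is shattered by the vertex set of H. -/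
variable {U : Type*} [Fintype U] [DecidableEq U]

/-- The Θ-class `E_e` crosses `H`: `H` contains an edge whose endpoints differ exactly in
coordinate `e`. -/
def crossesCl (H : Set (U → SignType)) (e : U) : Prop :=
  ∃ u ∈ H, ∃ v ∈ H, u e ≠ v e ∧ ∀ f, f ≠ e → u f = v f

/-- `D` is shattered by the vertex set `S`: every sign pattern in `{-1,+1}^D` occurs as the
restriction to `D` of some element of `S`. -/
def shattersSet (S : Set (U → SignType)) (D : Set U) : Prop :=
  ∀ p : U → SignType, (∀ e ∈ D, p e ≠ 0) → ∃ v ∈ S, ∀ e ∈ D, v e = p e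

/-- If `b` is metrically between `a` and `c` (Hamming), then on every coordinate where
`a` and `c` agree, `b` agrees with them too. -/
lemma between_coord {a b c : U → SignType} (h : hammingDist a c = hammingDist a b + hammingDist b c)
    {e : U} (hac : a e = c e) : b e = a e := by
  by_contra hne
  classical
  set A : Finset U := {i | a i ≠ b i} with hA
  set B : Finset U := {i | b i ≠ c i} with hB
  set S : Finset U := {i | a i ≠ c i} with hS
  have hsub : S ⊆ A ∪ B := by
    intro i hi
    simp only [hS, Finset.mem_filter, Finset.mem_univ, true_and] at hi
    simp only [hA, hB, Finset.mem_union, Finset.mem_filter, Finset.mem_univ, true_and]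
    by_contra hcon
    push_neg at hcon
    exact hi (hcon.1.trans hcon.2)
  have hcard : (A ∪ B).card ≤ A.card + B.card := Finset.card_union_le A B
  have hScard : S.card = A.card + B.card := h
  have hunion : (A ∪ B).card = A.card + B.card :=
    le_antisymm hcard (hScard ▸ Finset.card_le_card hsub)
  have hdisj : Disjoint A B := by
    rw [Finset.card_union_eq_card_add_card] at hunion
    exact hunion
  have heA : e ∈ A := by
    simp only [hA, Finset.mem_filter, Finset.mem_univ, true_and]
    exact fun h' => hne h'.symm
  have heB : e ∈ B := by
    simp only [hB, Finset.mem_filter, Finset.mem_univ, true_and]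
    intro h'
    exact hne (h'.trans hac.symm)
  exact (Finset.disjoint_left.mp hdisj heA) heB

/-- in a partial cube `G` (vertex set `V ⊆ {-1,+1}^U`, graph distance = Hamming
distance), if `H` is a gated convex subgraph, every `e ∈ D` crosses `H`, and `D` is shattered
by `V`, then `D` is shattered by `H`. -/
theorem gated_shatter
    (V H : Set (U → SignType))
    (hfull : ∀ v ∈ V, ∀ e, v e ≠ 0)
    (hHV : H ⊆ V)
    -- partial cube: between any two vertices there is a geodesic inside `V`
    (hpc : ∀ u ∈ V, ∀ v ∈ V, u ≠ v →
      ∃ w ∈ V, hammingDist u w = 1 ∧ hammingDist w v + 1 = hammingDist u v)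
    (hconv : ∀ u ∈ H, ∀ v ∈ H, ∀ w ∈ V,
      hammingDist u w + hammingDist w v = hammingDist u v → w ∈ H)
    (hgated : ∀ x ∈ V, ∃ g ∈ H, ∀ y ∈ H,
      hammingDist x y = hammingDist x g + hammingDist g y)
    (D : Set U) (hcross : ∀ e ∈ D, crossesCl H e)
    (hshatter : shattersSet V D) :
    shattersSet H D := by
  intro p hp
  obtain ⟨v, hvV, hvp⟩ := hshatter p hp
  obtain ⟨g, hgH, hgate⟩ := hgated v hvV
  refine ⟨g, hgH, fun e he => ?_⟩
  obtain ⟨u, huH, u', hu'H, hne, hagree⟩ := hcross e he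
  -- one of u e, u' e equals v e
  have hv0 := hfull v hvV e
  have hu0 := hfull u (hHV huH) e
  have hu'0 := hfull u' (hHV hu'H) e
  have hkey : ∃ y ∈ H, y e = v e := by
    by_cases h : u e = v e
    · exact ⟨u, huH, h⟩
    · refine ⟨u', hu'H, ?_⟩
      cases hve : v e <;> cases hue : u e <;> cases hu'e : u' e <;> simp_all
  obtain ⟨y, hyH, hye⟩ := hkey
  have := hgate y hyH
  have : g e = v e := between_coord this hye.symm
  rw [this, hvp e he]
end

section
/- Let M be an oriented matroid with set of covectors L on ground set U and D ⊆ U. Then D is shattered by the topes of M if and only if D contains the support of no circuit of M, i.e., D is independent in the underlying matroid. -/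
variable {U : Type*} [Fintype U] [DecidableEq U]

/-- Composition of sign vectors. -/
def sComp (X Y : U → SignType) : U → SignType :=
  fun e => if X e = 0 then Y e else X e

/-- The sign-vector partial order. -/
def sLe (X Y : U → SignType) : Prop := ∀ e, X e = 0 ∨ X e = Y e

/-- Support of a sign vector. -/
def supp (X : U → SignType) : Set U := {e | X e ≠ 0}

/-- Orthogonality of sign vectors. -/
def ortho (X Y : U → SignType) : Prop :=
  supp X ∩ supp Y = ∅ ∨
    ∃ e ∈ supp X ∩ supp Y, ∃ f ∈ supp X ∩ supp Y, X e * Y e = -(X f * Y f)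

/-!
A vector `C` is orthogonal to every covector `X`: below `X` lies a cocircuit `Y`; if `Y` meets
`supp C`, orthogonality of `C` and `Y` passes to `X ≥ Y`, and otherwise strong elimination of
`X` against `-Y` yields a covector with smaller support that still agrees with `X` on `supp C`.
So no tope agrees with a nonzero vector `C` on `supp C`, and the support of a circuit is not
shattered.

Conversely, if `D` contains the support of no nonzero vector, the sign pattern `p` restricted to
`D` is not orthogonal to some covector `Y`; after replacing `Y` by `-Y` if necessary, `Y` agrees
with `p` on the nonempty set `D ∩ supp Y`. Composing `Y` with a covector realising `p` on
`D \ {e₀}` for some `e₀ ∈ D ∩ supp Y`, which exists by induction, realises `p` on `D`.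
-/

section OrientedMatroid

variable {α : Type*} {L : Set (α → SignType)} {C X Y Z : α → SignType}

def IsTope (L : Set (α → SignType)) (T : α → SignType) : Prop :=
  T ∈ L ∧ ∀ Y ∈ L, sLe T Y → Y = T

def IsCocircuit (L : Set (α → SignType)) (X : α → SignType) : Prop :=
  X ∈ L ∧ X ≠ 0 ∧ ∀ Y ∈ L, Y ≠ 0 → sLe Y X → Y = X

def IsVector (L : Set (α → SignType)) (C : α → SignType) : Prop :=
  ∀ X, IsCocircuit L X → ortho C X

def IsCircuit (L : Set (α → SignType)) (C : α → SignType) : Prop :=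
  IsVector L C ∧ C ≠ 0 ∧
    ∀ C', IsVector L C' → C' ≠ 0 → supp C' ⊆ supp C → supp C' = supp C

theorem mem_supp {e : α} : e ∈ supp X ↔ X e ≠ 0 := Iff.rfl

theorem supp_zero : supp (0 : α → SignType) = ∅ := by
  simp [supp]

theorem supp_neg : supp (-X) = supp X := by
  ext e
  simp [supp]

theorem sLe_refl (X : α → SignType) : sLe X X := fun _ => Or.inr rfl

theorem sLe.apply_eq (h : sLe X Y) {e : α} (he : X e ≠ 0) : Y e = X e :=
  ((h e).resolve_left he).symm

theorem sLe.trans (hXY : sLe X Y) (hYZ : sLe Y Z) : sLe X Z := fun e => by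
  rcases hXY e with h | h
  · exact Or.inl h
  · rcases hYZ e with h' | h'
    · exact Or.inl (h.trans h')
    · exact Or.inr (h.trans h')

theorem sLe.supp_subset (h : sLe X Y) : supp X ⊆ supp Y := fun _ he =>
  mem_supp.2 (h.apply_eq he ▸ he)

theorem sLe.ncard_supp_lt [Finite α] (h : sLe X Y) (hne : X ≠ Y) :
    (supp X).ncard < (supp Y).ncard := by
  obtain ⟨e, he⟩ := Function.ne_iff.1 hne
  have hXe : X e = 0 := (h e).resolve_right he
  refine Set.ncard_lt_ncard (Set.ssubset_iff_of_subset h.supp_subset |>.2 ⟨e, ?_, ?_⟩)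
  · exact mem_supp.2 fun hYe => he (hXe.trans hYe.symm)
  · exact fun h' => h' hXe

theorem exists_isTope_sLe [Finite α] (hX : X ∈ L) : ∃ T, IsTope L T ∧ sLe X T := by
  obtain ⟨T, ⟨hT, hXT⟩, hmax⟩ := Set.Finite.exists_maximalFor (fun W => (supp W).ncard)
    {W | W ∈ L ∧ sLe X W} (Set.toFinite _) ⟨X, hX, sLe_refl X⟩
  refine ⟨T, ⟨hT, fun Y hY hTY => ?_⟩, hXT⟩
  by_contra hne
  have hlt := hTY.ncard_supp_lt (Ne.symm hne)
  exact hlt.not_ge (hmax ⟨hY, hXT.trans hTY⟩ hlt.le)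

theorem exists_isCocircuit_sLe [Finite α] (hX : X ∈ L) (hX0 : X ≠ 0) :
    ∃ Y, IsCocircuit L Y ∧ sLe Y X := by
  obtain ⟨Y, ⟨hY, hY0, hYX⟩, hmin⟩ := Set.Finite.exists_minimalFor (fun W => (supp W).ncard)
    {W | W ∈ L ∧ W ≠ 0 ∧ sLe W X} (Set.toFinite _) ⟨X, hX, hX0, sLe_refl X⟩
  refine ⟨Y, ⟨hY, hY0, fun Z hZ hZ0 hZY => ?_⟩, hYX⟩
  by_contra hne
  have hlt := hZY.ncard_supp_lt hne
  exact hlt.not_ge (hmin ⟨hZ, hZ0, hZY.trans hYX⟩ hlt.le)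

theorem exists_isCircuit_supp_subset [Finite α] (hC : IsVector L C) (hC0 : C ≠ 0) :
    ∃ C', IsCircuit L C' ∧ supp C' ⊆ supp C := by
  obtain ⟨C', ⟨hC'v, hC'0, hC'C⟩, hmin⟩ := Set.Finite.exists_minimalFor (fun W => (supp W).ncard)
    {W | IsVector L W ∧ W ≠ 0 ∧ supp W ⊆ supp C} (Set.toFinite _) ⟨C, hC, hC0, subset_rfl⟩
  refine ⟨C', ⟨hC'v, hC'0, fun C'' hv h0 hsub => ?_⟩, hC'C⟩
  exact Set.eq_of_subset_of_ncard_le hsub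
    (hmin ⟨hv, h0, hsub.trans hC'C⟩ (Set.ncard_le_ncard hsub))

theorem ortho.congr_right (h : ortho C X) (hXY : Set.EqOn X Y (supp C)) : ortho C Y := by
  have hsupp : supp C ∩ supp X = supp C ∩ supp Y := by
    ext e
    exact and_congr_right fun he => by rw [mem_supp, mem_supp, hXY he]
  rcases h with h | ⟨a, ha, b, hb, hab⟩
  · exact Or.inl (hsupp ▸ h)
  · rw [hXY ha.1, hXY hb.1] at hab
    exact Or.inr ⟨a, hsupp ▸ ha, b, hsupp ▸ hb, hab⟩

theorem ortho.of_sLe (h : ortho C Y) (hne : (supp C ∩ supp Y).Nonempty) (hYX : sLe Y X) :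
    ortho C X := by
  rcases h with h | ⟨a, ha, b, hb, hab⟩
  · exact absurd h hne.ne_empty
  · rw [← hYX.apply_eq ha.2, ← hYX.apply_eq hb.2] at hab
    exact Or.inr ⟨a, ⟨ha.1, hYX.supp_subset ha.2⟩, b, ⟨hb.1, hYX.supp_subset hb.2⟩, hab⟩

theorem not_ortho_of_eqOn (hC0 : C ≠ 0) (h : Set.EqOn X C (supp C)) : ¬ ortho C X := by
  have hsq : ∀ a : SignType, a ≠ 0 → a * a = 1 := by decide
  rintro (hd | ⟨a, ha, b, hb, hab⟩)
  · obtain ⟨e, he⟩ := Function.ne_iff.1 hC0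
    have hmem : e ∈ supp C ∩ supp X := ⟨he, mem_supp.2 (h he ▸ he)⟩
    exact hd.subset hmem
  · rw [h ha.1, h hb.1, hsq _ ha.1, hsq _ hb.1] at hab
    exact absurd hab (by decide)

theorem exists_elim_of_sLe [Finite α]
    (hSE : ∀ X ∈ L, ∀ Y ∈ L, ∀ e, X e * Y e = -1 →
      ∃ Z ∈ L, Z e = 0 ∧ ∀ f, X f * Y f ≠ -1 → Z f = sComp X Y f)
    (hSym : ∀ X ∈ L, -X ∈ L) (hX : X ∈ L) (hY : Y ∈ L) (hYX : sLe Y X) (hY0 : Y ≠ 0) :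
    ∃ Z ∈ L, (∀ e, Y e = 0 → Z e = X e) ∧ (supp Z).ncard < (supp X).ncard := by
  obtain ⟨f, hf⟩ := Function.ne_iff.1 hY0
  have hXf : X f * (-Y) f = -1 := by
    have key : ∀ a : SignType, a ≠ 0 → a * -a = -1 := by decide
    rw [Pi.neg_apply, hYX.apply_eq hf]
    exact key _ hf
  obtain ⟨Z, hZ, hZf, hZX⟩ := hSE X hX (-Y) (hSym Y hY) f hXf
  have hoff : ∀ e, Y e = 0 → Z e = X e := by
    intro e he
    rw [hZX e (by simp [he]), sComp, Pi.neg_apply, he]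
    split_ifs with hXe <;> simp [hXe]
  have hsub : supp Z ⊆ supp X \ {f} := by
    intro e he
    refine ⟨?_, fun hef => mem_supp.1 he (hef ▸ hZf)⟩
    by_cases hYe : Y e = 0
    · exact mem_supp.2 (hoff e hYe ▸ he)
    · exact hYX.supp_subset hYe
  refine ⟨Z, hZ, hoff, (Set.ncard_le_ncard hsub).trans_lt ?_⟩
  exact Set.ncard_sdiff_singleton_lt_of_mem (hYX.supp_subset hf)

theorem IsVector.ortho [Finite α]
    (hSE : ∀ X ∈ L, ∀ Y ∈ L, ∀ e, X e * Y e = -1 →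
      ∃ Z ∈ L, Z e = 0 ∧ ∀ f, X f * Y f ≠ -1 → Z f = sComp X Y f)
    (hSym : ∀ X ∈ L, -X ∈ L) (hC : IsVector L C) (hX : X ∈ L) : ortho C X := by
  induction hn : (supp X).ncard using Nat.strong_induction_on generalizing X with
  | _ n ih =>
  by_cases hX0 : X = 0
  · exact Or.inl (by rw [hX0, supp_zero, Set.inter_empty])
  obtain ⟨Y, hYc, hYX⟩ := exists_isCocircuit_sLe hX hX0
  by_cases hCY : (supp C ∩ supp Y).Nonempty
  · exact (hC Y hYc).of_sLe hCY hYX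
  obtain ⟨Z, hZ, hZX, hlt⟩ := exists_elim_of_sLe hSE hSym hX hYc.1 hYX hYc.2.1
  refine (ih _ (hn ▸ hlt) hZ rfl).congr_right fun e he => hZX e ?_
  by_contra hYe
  exact hCY ⟨e, he, hYe⟩

theorem exists_mem_eqOn_inter_of_not_ortho (hSym : ∀ X ∈ L, -X ∈ L) (hY : Y ∈ L)
    (h : ¬ ortho C Y) :
    ∃ Y' ∈ L, (supp C ∩ supp Y').Nonempty ∧ Set.EqOn Y' C (supp C ∩ supp Y') := by
  simp only [ortho, not_or, not_exists, not_and] at h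
  obtain ⟨hne, hsame⟩ := h
  obtain ⟨e₀, he₀⟩ := Set.nonempty_iff_ne_empty.2 hne
  have hconst : ∀ e ∈ supp C ∩ supp Y, C e * Y e = C e₀ * Y e₀ := by
    intro e he
    have key : ∀ a b : SignType, a ≠ 0 → b ≠ 0 → a ≠ -b → a = b := by decide
    exact key _ _ (mul_ne_zero he.1 he.2) (mul_ne_zero he₀.1 he₀.2) (hsame e he e₀ he₀)
  rcases SignType.trichotomy (C e₀ * Y e₀) with hs | hs | hs
  · refine ⟨-Y, hSym Y hY, ⟨e₀, by rwa [supp_neg]⟩, fun e he => ?_⟩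
    rw [supp_neg] at he
    have key : ∀ a b : SignType, a * b = -1 → -b = a := by decide
    exact key _ _ ((hconst e he).trans hs)
  · exact absurd hs (mul_ne_zero he₀.1 he₀.2)
  · refine ⟨Y, hY, ⟨e₀, he₀⟩, fun e he => ?_⟩
    have key : ∀ a b : SignType, a * b = 1 → b = a := by decide
    exact key _ _ ((hconst e he).trans hs)

theorem exists_mem_eqOn [Finite α] (hZ : (0 : α → SignType) ∈ L)
    (hC : ∀ X ∈ L, ∀ Y ∈ L, sComp X Y ∈ L) (hSym : ∀ X ∈ L, -X ∈ L) {D : Set α}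
    (hD : ∀ C, IsVector L C → C ≠ 0 → ¬ supp C ⊆ D) {p : α → SignType}
    (hp : ∀ e ∈ D, p e ≠ 0) : ∃ X ∈ L, Set.EqOn X p D := by
  induction D using WellFoundedLT.induction with
  | _ D ih =>
  rcases D.eq_empty_or_nonempty with rfl | ⟨e₁, he₁⟩
  · exact ⟨0, hZ, Set.eqOn_empty _ _⟩
  have hsuppP : supp (D.indicator p) = D := by
    ext e
    by_cases he : e ∈ D <;> simp [mem_supp, he, hp]
  have hP0 : D.indicator p ≠ 0 := fun h =>
    hp e₁ he₁ (by simpa [he₁] using congrFun h e₁)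
  obtain ⟨Y, hYc, hPY⟩ : ∃ Y, IsCocircuit L Y ∧ ¬ ortho (D.indicator p) Y := by
    by_contra! h
    exact hD (D.indicator p) h hP0 hsuppP.le
  obtain ⟨Y', hY', ⟨e₀, he₀⟩, hY'p⟩ :=
    exists_mem_eqOn_inter_of_not_ortho hSym hYc.1 hPY
  rw [hsuppP] at he₀ hY'p
  obtain ⟨X', hX', hX'p⟩ := ih (D \ {e₀}) (Set.sdiff_singleton_ssubset.2 he₀.1)
    (fun C hCv hC0 hCD => hD C hCv hC0 (hCD.trans Set.sdiff_subset)) (fun e he => hp e he.1)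
  refine ⟨sComp Y' X', hC Y' hY' X' hX', fun e he => ?_⟩
  by_cases hY'e : Y' e = 0
  · have hne : e ≠ e₀ := fun h => he₀.2 (h ▸ hY'e)
    simp only [sComp, hY'e, if_true]
    exact hX'p ⟨he, hne⟩
  · simp only [sComp, hY'e, if_false]
    rw [hY'p ⟨he, hY'e⟩, Set.indicator_of_mem he]

end OrientedMatroid

theorem om_shatters_iff_independent_general
    (L : Set (U → SignType))
    (hZ : (0 : U → SignType) ∈ L)
    (hC : ∀ X ∈ L, ∀ Y ∈ L, sComp X Y ∈ L)
    (hSE : ∀ X ∈ L, ∀ Y ∈ L, ∀ e, X e * Y e = -1 →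
      ∃ Z ∈ L, Z e = 0 ∧ ∀ f, X f * Y f ≠ -1 → Z f = sComp X Y f)
    (hSym : ∀ X ∈ L, -X ∈ L)
    (D : Set U) :
    -- `D` is shattered by the topes (the maximal covectors)
    (∀ p : U → SignType, (∀ e ∈ D, p e ≠ 0) →
      ∃ T ∈ L, (∀ Y ∈ L, sLe T Y → Y = T) ∧ ∀ e ∈ D, T e = p e) ↔
    -- `D` contains the support of no circuit
    (∀ C : U → SignType,
      (∀ X, (X ∈ L ∧ X ≠ 0 ∧ ∀ Y ∈ L, Y ≠ 0 → sLe Y X → Y = X) → ortho C X) →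
      C ≠ 0 →
      (∀ C' : U → SignType,
        (∀ X, (X ∈ L ∧ X ≠ 0 ∧ ∀ Y ∈ L, Y ≠ 0 → sLe Y X → Y = X) → ortho C' X) →
        C' ≠ 0 → supp C' ⊆ supp C → supp C' = supp C) →
      ¬ supp C ⊆ D) := by
  constructor
  · intro hsh C hCv hC0 _ hCD
    obtain ⟨T, hT, -, hTp⟩ := hsh (fun e => if C e = 0 then 1 else C e)
      fun e _ => by split_ifs with h <;> simp [h]
    have hTC : Set.EqOn T C (supp C) := fun e he => by
      rw [hTp e (hCD he), if_neg (mem_supp.1 he)]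
    exact not_ortho_of_eqOn hC0 hTC (IsVector.ortho hSE hSym hCv hT)
  · intro hD p hp
    have hD' : ∀ C, IsVector L C → C ≠ 0 → ¬ supp C ⊆ D := fun C hCv hC0 hCD => by
      obtain ⟨C', ⟨hC'v, hC'0, hC'min⟩, hC'C⟩ := exists_isCircuit_supp_subset hCv hC0
      exact hD C' hC'v hC'0 hC'min (hC'C.trans hCD)
    obtain ⟨X, hX, hXp⟩ := exists_mem_eqOn hZ hC hSym hD' hp
    obtain ⟨T, ⟨hT, hTmax⟩, hXT⟩ := exists_isTope_sLe hX
    exact ⟨T, hT, hTmax, fun e he => (hXT.apply_eq (hXp he ▸ hp e he)).trans (hXp he)⟩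

/-- For an oriented matroid with covector set `L` on ground set `U` and
`D ⊆ U`, `D` is shattered by the topes of `M` iff `D` contains the support of no circuit of
`M` (i.e., `D` is independent in the underlying matroid). -/
theorem om_shatters_iff_independent
    (L : Set (U → SignType))
    (hZ : (0 : U → SignType) ∈ L)
    (hC : ∀ X ∈ L, ∀ Y ∈ L, sComp X Y ∈ L)
    (hSE : ∀ X ∈ L, ∀ Y ∈ L, ∀ e, X e * Y e = -1 →
      ∃ Z ∈ L, Z e = 0 ∧ ∀ f, X f * Y f ≠ -1 → Z f = sComp X Y f)
    (hSym : ∀ X ∈ L, -X ∈ L)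
    -- simplicity
    (hSimp1 : ∀ (e : U) (s : SignType), ∃ X ∈ L, X e = s)
    (hSimp2 : ∀ e f : U, e ≠ f → (∃ X ∈ L, X e * X f = 1) ∧ ∃ Y ∈ L, Y e * Y f = -1)
    (D : Set U) :
    -- `D` is shattered by the topes (the maximal covectors)
    (∀ p : U → SignType, (∀ e ∈ D, p e ≠ 0) →
      ∃ T ∈ L, (∀ Y ∈ L, sLe T Y → Y = T) ∧ ∀ e ∈ D, T e = p e) ↔
    -- `D` contains the support of no circuit
    (∀ C : U → SignType,
      (∀ X, (X ∈ L ∧ X ≠ 0 ∧ ∀ Y ∈ L, Y ≠ 0 → sLe Y X → Y = X) → ortho C X) →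
      C ≠ 0 →
      (∀ C' : U → SignType,
        (∀ X, (X ∈ L ∧ X ≠ 0 ∧ ∀ Y ∈ L, Y ≠ 0 → sLe Y X → Y = X) → ortho C' X) →
        C' ≠ 0 → supp C' ⊆ supp C → supp C' = supp C) →
      ¬ supp C ⊆ D) :=
  om_shatters_iff_independent_general L hZ hC hSE hSym D
end

section
/- For a partial cube G embedded in {-1,+1}^U and a convex subgraph H, the set of realizable samples S with [S] = H (where [S] is the set of vertices of G above S) forms an interval [S_⊥, S^⊤] in the sign-vector order: S_⊥ records the coordinates whose Θ-class osculates with H, S^⊤ records all coordinates e with H contained in one halfspace G_e^±, and for every sample S, [S] = H if and only if S_⊥ ≤ S ≤ S^⊤. -/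
variable {U : Type*} [Fintype U] [DecidableEq U]

section Aux

lemma sign_cases (a : SignType) : a = 1 ∨ a = 0 ∨ a = -1 := by
  cases a <;> simp

lemma sign_forced : ∀ a b c : SignType,
    a ≠ 0 → b ≠ 0 → c ≠ 0 → a ≠ c → b ≠ c → a = b := by
  intro a b c
  cases a <;> cases b <;> cases c <;> simp_all

lemma sign_pos_of : ∀ a : SignType, a ≠ 0 → a ≠ -1 → a = 1 := by decide

lemma sign_neg_of : ∀ a : SignType, a ≠ 0 → a ≠ 1 → a = -1 := by decide

omit [DecidableEq U] in
lemma hd_one {u w : U → SignType} (h : hammingDist u w = 1) :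
    ∃ e, u e ≠ w e ∧ ∀ f, f ≠ e → u f = w f := by
  rw [hammingDist, Finset.card_eq_one] at h
  obtain ⟨e, he⟩ := h
  have hmem : ∀ f : U, u f ≠ w f ↔ f ∈ ({e} : Finset U) := by
    intro f
    rw [← he]
    simp
  refine ⟨e, (hmem e).mpr (by simp), fun f hf => ?_⟩
  by_contra hne
  exact hf (Finset.mem_singleton.mp ((hmem f).mp hne))

omit [DecidableEq U] in
lemma hd_mono {u w T : U → SignType} (h : ∀ f, u f ≠ T f → w f ≠ T f) :
    hammingDist u T ≤ hammingDist w T := by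
  rw [hammingDist, hammingDist]
  apply Finset.card_le_card
  intro f hf
  simp only [Finset.mem_filter, Finset.mem_univ, true_and] at hf ⊢
  exact h f hf

lemma hd_step {u w v : U → SignType} (e : U) (hue : u e ≠ w e)
    (hagree : ∀ f, f ≠ e → u f = w f) (hve : v e = w e) :
    1 + hammingDist w v = hammingDist u v := by
  rw [hammingDist, hammingDist]
  have hset : (Finset.univ.filter fun f => u f ≠ v f)
      = insert e (Finset.univ.filter fun f => w f ≠ v f) := by
    ext f
    simp only [Finset.mem_filter, Finset.mem_univ, true_and, Finset.mem_insert]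
    by_cases hf : f = e
    · subst hf
      constructor
      · intro; left; rfl
      · intro; rw [hve]; exact hue
    · rw [hagree f hf]
      exact ⟨Or.inr, fun h => h.resolve_left hf⟩
  rw [hset, Finset.card_insert_of_notMem (by simp [hve]), Nat.add_comm]

end Aux

/-- The Θ-class `E_e` osculates with `H` (inside the vertex set `V`): it does not cross `H`
but some edge of `E_e` has exactly one endpoint in `H`. -/
def osculatesCl (V H : Set (U → SignType)) (e : U) : Prop :=
  ¬ crossesCl H e ∧
    ∃ u ∈ H, ∃ v ∈ V, v ∉ H ∧ u e ≠ v e ∧ ∀ f, f ≠ e → u f = v f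

/-- for a partial cube `G` with vertex set `V ⊆ {-1,+1}^U` and a (nonempty)
convex subgraph `H`, the set of samples `S` with `[S] = H` is exactly the interval
`[S_⊥, S^⊤]` in the sign-vector order, where `S_⊥` records the osculating coordinates and
`S^⊤` records all coordinates `e` with `H` contained in one halfspace. -/
theorem samples_representing_convex_set_interval
    (V H : Set (U → SignType))
    (hfull : ∀ v ∈ V, ∀ e, v e ≠ 0)
    (hHV : H ⊆ V) (hHne : H.Nonempty)
    -- partial cube: between any two vertices there is a geodesic inside `V`
    (hpc : ∀ u ∈ V, ∀ v ∈ V, u ≠ v →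
      ∃ w ∈ V, hammingDist u w = 1 ∧ hammingDist w v + 1 = hammingDist u v)
    -- `H` is convex in `G`
    (hconv : ∀ u ∈ H, ∀ v ∈ H, ∀ w ∈ V,
      hammingDist u w + hammingDist w v = hammingDist u v → w ∈ H)
    (Sbot Stop : U → SignType)
    (hSbot : ∀ e : U,
      (Sbot e = 1 ↔ osculatesCl V H e ∧ ∀ v ∈ H, v e = 1) ∧
      (Sbot e = -1 ↔ osculatesCl V H e ∧ ∀ v ∈ H, v e = -1))
    (hStop : ∀ e : U,
      (Stop e = 1 ↔ ∀ v ∈ H, v e = 1) ∧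
      (Stop e = -1 ↔ ∀ v ∈ H, v e = -1)) :
    ∀ S : U → SignType,
      ({T ∈ V | sLe S T} = H) ↔ (sLe Sbot S ∧ sLe S Stop) := by
  intro S
  constructor
  · intro h
    subst h
    constructor
    · -- sLe Sbot S
      intro e
      rcases sign_cases (Sbot e) with h1 | h1 | h1
      · right
        obtain ⟨⟨hncross, u, huH, v, hvV, hvH, hne, hagree⟩, hall⟩ := (hSbot e).1.mp h1
        have hnsle : ¬ sLe S v := fun hs => hvH ⟨hvV, hs⟩
        obtain ⟨f, hf⟩ := not_forall.mp hnsle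
        rw [not_or] at hf
        have hfe : f = e := by
          by_contra hfe
          rcases huH.2 f with h0 | h0
          · exact hf.1 h0
          · exact hf.2 (h0.trans (hagree f hfe))
        rw [hfe] at hf
        have hue : u e = 1 := hall u huH
        have hve : v e = -1 :=
          sign_neg_of _ (hfull v hvV e) (fun h => hne (hue.trans h.symm))
        rw [h1]
        exact (sign_pos_of _ hf.1 (hve ▸ hf.2)).symm
      · left; exact h1
      · right
        obtain ⟨⟨hncross, u, huH, v, hvV, hvH, hne, hagree⟩, hall⟩ := (hSbot e).2.mp h1
        have hnsle : ¬ sLe S v := fun hs => hvH ⟨hvV, hs⟩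
        obtain ⟨f, hf⟩ := not_forall.mp hnsle
        rw [not_or] at hf
        have hfe : f = e := by
          by_contra hfe
          rcases huH.2 f with h0 | h0
          · exact hf.1 h0
          · exact hf.2 (h0.trans (hagree f hfe))
        rw [hfe] at hf
        have hue : u e = -1 := hall u huH
        have hve : v e = 1 :=
          sign_pos_of _ (hfull v hvV e) (fun h => hne (hue.trans h.symm))
        rw [h1]
        exact (sign_neg_of _ hf.1 (hve ▸ hf.2)).symm
    · -- sLe S Stop
      intro e
      rcases sign_cases (S e) with h1 | h1 | h1
      · right
        have : Stop e = 1 := (hStop e).1.mpr (fun v hv => by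
          rcases hv.2 e with h0 | h0
          · exact absurd h0 (h1 ▸ one_ne_zero)
          · exact h0.symm.trans h1)
        rw [this, h1]
      · left; exact h1
      · right
        have : Stop e = -1 := (hStop e).2.mpr (fun v hv => by
          rcases hv.2 e with h0 | h0
          · exact absurd h0 (h1 ▸ (by decide : (-1 : SignType) ≠ 0))
          · exact h0.symm.trans h1)
        rw [this, h1]
  · rintro ⟨hbot, htop⟩
    have hHsub : ∀ v ∈ H, sLe S v := by
      intro v hv e
      rcases sign_cases (S e) with h1 | h1 | h1
      · right
        have hte : Stop e = 1 := by
          rcases htop e with h | h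
          · exact absurd (h1 ▸ h) (by decide)
          · exact h.symm.trans h1
        rw [h1, ((hStop e).1.mp hte) v hv]
      · left; exact h1
      · right
        have hte : Stop e = -1 := by
          rcases htop e with h | h
          · exact absurd (h1 ▸ h) (by decide)
          · exact h.symm.trans h1
        rw [h1, ((hStop e).2.mp hte) v hv]
    ext T
    simp only [Set.mem_sep_iff]
    constructor
    · rintro ⟨hTV, hTS⟩
      by_contra hTH
      obtain ⟨u, huH, humin⟩ :=
        Set.exists_min_image H (fun x => hammingDist x T) (Set.toFinite H) hHne
      have huV := hHV huH
      have huT : u ≠ T := fun h => hTH (h ▸ huH)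
      obtain ⟨w, hwV, hw1, hwd⟩ := hpc u huV T hTV huT
      obtain ⟨e, hue, hagree⟩ := hd_one hw1
      have hwH : w ∉ H := by
        intro hwH
        have := humin w hwH
        omega
      have hTe : T e = w e := by
        by_contra hTe
        have hTu : u e = T e :=
          sign_forced _ _ _ (hfull u huV e) (hfull T hTV e) (hfull w hwV e) hue hTe
        have : hammingDist u T ≤ hammingDist w T := by
          apply hd_mono
          intro f hf
          by_cases hfe : f = e
          · subst hfe; exact absurd hTu hf
          · rw [← hagree f hfe]; exact hf
        omega
      have hallH : ∀ v ∈ H, v e = u e := by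
        intro v hv
        by_contra hve
        have hveq : v e = w e :=
          sign_forced _ _ _ (hfull v (hHV hv) e) (hfull w hwV e) (hfull u huV e)
            hve (Ne.symm hue)
        have hstep := hd_step e hue hagree hveq
        exact hwH (hconv u huH v hv w hwV (by rw [hw1]; exact hstep))
      have hncross : ¬ crossesCl H e := by
        rintro ⟨a, haH, b, hbH, hab, -⟩
        rw [hallH a haH, hallH b hbH] at hab
        exact hab rfl
      have hosc : osculatesCl V H e := ⟨hncross, u, huH, w, hwV, hwH, hue, hagree⟩
      rcases sign_cases (u e) with hu1 | hu0 | hu1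
      · have hSb : Sbot e = 1 :=
          (hSbot e).1.mpr ⟨hosc, fun v hv => (hallH v hv).trans hu1⟩
        have hSe : S e = 1 := by
          rcases hbot e with h | h
          · exact absurd (h ▸ hSb) (by decide)
          · exact h ▸ hSb
        have hTe1 : T e = 1 := by
          rcases hTS e with h | h
          · exact absurd (h.symm.trans hSe) (by decide)
          · exact h ▸ hSe
        have hwe : w e = -1 := sign_neg_of _ (hfull w hwV e)
          (fun h => hue (hu1.trans h.symm))
        rw [hwe] at hTe
        exact absurd (hTe1 ▸ hTe) (by decide)
      · exact hfull u huV e hu0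
      · have hSb : Sbot e = -1 :=
          (hSbot e).2.mpr ⟨hosc, fun v hv => (hallH v hv).trans hu1⟩
        have hSe : S e = -1 := by
          rcases hbot e with h | h
          · exact absurd (h ▸ hSb) (by decide)
          · exact h ▸ hSb
        have hTe1 : T e = -1 := by
          rcases hTS e with h | h
          · exact absurd (h.symm.trans hSe) (by decide)
          · exact h ▸ hSe
        have hwe : w e = 1 := sign_pos_of _ (hfull w hwV e)
          (fun h => hue (hu1.trans h.symm))
        rw [hwe] at hTe
        exact absurd (hTe1 ▸ hTe) (by decide)
    · intro hTH
      exact ⟨hHV hTH, hHsub T hTH⟩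
end
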